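/- The space Q_1^-Λ^k on a cube K admits the direct sum decomposition Q_1^-Λ^k(K) = R(d^{k-1}, Q_1^-Λ^{k-1}) ⊕ κ R(d^k, Q_1^-Λ^k), i.e., it is the direct sum of exact forms from Q_1^-Λ^{k-1} and the Koszul image of the range of d^k on Q_1^-Λ^k. -/

import Mathlib

open MvPolynomial Finset MeasureTheory

/-- Strictly increasing `k`-indices in `{1,…,n}`, modelled as `k`-element subsets of `Fin n`. -/
abbrev Idx (n k : ℕ) := {s : Finset (Fin n) // s.card = k}

/-- A differential `k`-form with polynomial coefficients on `ℝⁿ`: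
one polynomial coefficient for each increasing `k`-index. -/
abbrev Form (n k : ℕ) := Idx n k → MvPolynomial (Fin n) ℝ

/-- The sign `(-1)^{#\{j ∈ s : j < i\}}`. -/
noncomputable def sgn {n : ℕ} (s : Finset (Fin n)) (i : Fin n) : ℝ :=
  (-1) ^ (s.filter (· < i)).card

def eraseIdx {n k : ℕ} (s : Idx n (k+1)) {i : Fin n} (hi : i ∈ s.1) : Idx n k :=
  ⟨s.1.erase i, by simp [Finset.card_erase_of_mem hi, s.2]⟩

def insertIdx {n k : ℕ} (s : Idx n k) {i : Fin n} (hi : i ∉ s.1) : Idx n (k+1) :=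
  ⟨insert i s.1, by simp [Finset.card_insert_of_notMem hi, s.2]⟩

/-- The exterior derivative `d^k`. -/
noncomputable def extd (n k : ℕ) : Form n k →ₗ[ℝ] Form n (k+1) where
  toFun ω := fun s => ∑ i ∈ s.1.attach, sgn s.1 i.1 • pderiv i.1 (ω (eraseIdx s i.2))
  map_add' ω η := by
    funext s
    simp [Finset.sum_add_distrib, smul_add]
  map_smul' c ω := by
    funext s
    simp only [Pi.smul_apply, RingHom.id_apply]
    rw [Finset.smul_sum]
    exact Finset.sum_congr rfl (fun i _ => by rw [(pderiv i.1).map_smul, smul_comm])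

/-- The Koszul operator `κ` (contraction with the position vector field). -/
noncomputable def koszul (n k : ℕ) : Form n (k+1) →ₗ[ℝ] Form n k where
  toFun ω := fun s =>
    ∑ i ∈ (s.1ᶜ).attach, sgn s.1 i.1 • (X i.1 * ω (insertIdx s (Finset.mem_compl.mp i.2)))
  map_add' ω η := by
    funext s
    simp [Finset.sum_add_distrib, mul_add, smul_add]
  map_smul' c ω := by
    funext s
    simp only [Pi.smul_apply, RingHom.id_apply, mul_smul_comm]
    rw [Finset.smul_sum]
    exact Finset.sum_congr rfl (fun i _ => (smul_comm _ _ _))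

/-- The codifferential `δ_{k+1}` (the formal adjoint of `d^k` on Euclidean `ℝⁿ`,
which coincides with `(-1)^{(k+1)n} ⋆ d^{n-k-1} ⋆`). -/
noncomputable def codiff (n k : ℕ) : Form n (k+1) →ₗ[ℝ] Form n k where
  toFun ω := fun s =>
    -∑ i ∈ (s.1ᶜ).attach, sgn s.1 i.1 • pderiv i.1 (ω (insertIdx s (Finset.mem_compl.mp i.2)))
  map_add' ω η := by
    funext s
    simp [Finset.sum_add_distrib, smul_add]
    ring
  map_smul' c ω := by
    funext s
    simp only [Pi.smul_apply, RingHom.id_apply, smul_neg, neg_inj]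
    rw [Finset.smul_sum]
    exact Finset.sum_congr rfl (fun i _ => by rw [(pderiv i.1).map_smul, smul_comm])

/-- The operator `κ^δ = ⋆ ∘ κ ∘ ⋆` (exterior multiplication by `Σ xᵢ dxⁱ`, up to sign). -/
noncomputable def kappaDelta (n k : ℕ) : Form n k →ₗ[ℝ] Form n (k+1) where
  toFun ω := fun s => ∑ i ∈ s.1.attach, sgn s.1 i.1 • (X i.1 * ω (eraseIdx s i.2))
  map_add' ω η := by
    funext s
    simp [Finset.sum_add_distrib, mul_add, smul_add]
  map_smul' c ω := by
    funext s
    simp only [Pi.smul_apply, RingHom.id_apply, mul_smul_comm]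
    rw [Finset.smul_sum]
    exact Finset.sum_congr rfl (fun i _ => (smul_comm _ _ _))

/-- Sign of the permutation `(t, tᶜ) ↦ (1,…,n)`, i.e. `⋆ dx^t = starSign t · dx^{tᶜ}`. -/
noncomputable def starSign {n : ℕ} (t : Finset (Fin n)) : ℝ :=
  (-1) ^ (∑ i ∈ t, ((tᶜ).filter (· < i)).card)

/-- The Hodge star operator on `k`-forms on `ℝⁿ`, `k + l = n`. -/
noncomputable def hodge (n k l : ℕ) (h : k + l = n) : Form n k →ₗ[ℝ] Form n l where
  toFun ω := fun s => starSign (s.1ᶜ) •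
    ω ⟨s.1ᶜ, by rw [Finset.card_compl, s.2, Fintype.card_fin]; omega⟩
  map_add' ω η := by funext s; simp [smul_add]
  map_smul' c ω := by funext s; simp only [Pi.smul_apply, RingHom.id_apply]; rw [smul_comm]

/-- The monomial form `x_τ dx^σ`. -/
noncomputable def monForm (n k : ℕ) (τ : Finset (Fin n)) (σ : Idx n k) : Form n k :=
  fun s => if s = σ then ∏ i ∈ τ, X i else 0

/-- `Q_1^-Λ^k = span{ x_τ dx^σ : |σ| = k, 0 ≤ |τ| ≤ n-k, τ ⊆ σᶜ }`. -/
noncomputable def Qm (n k : ℕ) : Submodule ℝ (Form n k) :=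
  Submodule.span ℝ
    {ω | ∃ (τ : Finset (Fin n)) (σ : Idx n k), τ.card ≤ n - k ∧ τ ⊆ (σ.1)ᶜ ∧ ω = monForm n k τ σ}

/-- `Q_1^{*,-}Λ^k = span{ x_τ' dx^σ' : |σ'| = k, 0 ≤ |τ'| ≤ k, τ' ⊆ σ' }`. -/
noncomputable def Qs (n k : ℕ) : Submodule ℝ (Form n k) :=
  Submodule.span ℝ
    {ω | ∃ (τ : Finset (Fin n)) (σ : Idx n k), τ.card ≤ k ∧ τ ⊆ σ.1 ∧ ω = monForm n k τ σ}

/-- `P_0Λ^k`: forms with constant coefficients. -/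
noncomputable def P0 (n k : ℕ) : Submodule ℝ (Form n k) :=
  Submodule.span ℝ {ω | ∃ σ : Idx n k, ω = monForm n k ∅ σ}

/-- The Whitney space `P_1^-Λ^k = P_0Λ^k + κ(P_0Λ^{k+1})`. -/
noncomputable def Pm (n k : ℕ) : Submodule ℝ (Form n k) :=
  P0 n k ⊔ Submodule.map (koszul n k) (P0 n (k+1))

/-- The star Whitney space `P_1^{*,-}Λ^{k+1} = P_0Λ^{k+1} + κ^δ(P_0Λ^k)`. -/
noncomputable def PsS (n k : ℕ) : Submodule ℝ (Form n (k+1)) :=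
  P0 n (k+1) ⊔ Submodule.map (kappaDelta n k) (P0 n k)

/-- `L²` inner product of `k`-forms on the centered box `[-r, r]`. -/
noncomputable def binner (n k : ℕ) (r : Fin n → ℝ) (ω η : Form n k) : ℝ :=
  ∑ s : Idx n k, ∫ x in Set.Icc (fun i => -(r i)) r, eval x (ω s * η s)

/-- `L²` inner product of `k`-forms on the reference cube `T = [-1,1]ⁿ`. -/
noncomputable def finner (n k : ℕ) (ω η : Form n k) : ℝ :=
  binner n k (fun _ => (1 : ℝ)) ω η

/-!
Write `d = Σᵢ dxᵢ ∧ ∂ᵢ` and `κ = Σᵢ xᵢ ι(∂ᵢ)`. The operators `dxᵢ ∧ ·` and `ι(∂ᵢ)` satisfy the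
canonical anticommutation relations, which give `d² = 0`, `κ² = 0` and the homotopy formula
`dκ + κd = (k + 1) + Σᵢ xᵢ ∂ᵢ` on `(k+1)`-forms. The Euler operator `Σᵢ xᵢ ∂ᵢ` multiplies a monomial
by its degree, so `dκ + κd` is injective; a form that is both exact and in the image of `κ` is
killed by `d` and by `κ`, hence vanishes. On `x_τ dx^σ` the homotopy acts as the scalar
`k + 1 + |τ|`, which writes every generator of `Q₁⁻Λ^{k+1}` as `d(κ ·) + κ(d ·)`; `d` and `κ` map
the `Q₁⁻` spaces into each other since they only move one index between `τ` and `σ`.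
-/

lemma Finset.sum_sum_eq_zero_of_antisymm {α M : Type*} [AddCommGroup M] [IsAddTorsionFree M]
    (s : Finset α) (f : α → α → M) (hf : ∀ i j, f i j = -f j i) :
    ∑ i ∈ s, ∑ j ∈ s, f i j = 0 := by
  refine self_eq_neg.mp ?_
  conv_lhs => rw [Finset.sum_comm]
  rw [← sum_neg_distrib]
  exact sum_congr rfl fun i _ => by
    rw [← sum_neg_distrib]
    exact sum_congr rfl fun j _ => hf j i

lemma MvPolynomial.pderiv_pderiv_comm {σ R : Type*} [CommSemiring R] (i j : σ)
    (p : MvPolynomial σ R) :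
    pderiv i (pderiv j p) = pderiv j (pderiv i p) := by
  classical
  induction p using MvPolynomial.induction_on' with
  | monomial e c =>
    rcases eq_or_ne i j with rfl | hij
    · rfl
    · simp only [pderiv_monomial, Finsupp.coe_tsub, Pi.sub_apply, Finsupp.single_apply,
        hij, hij.symm, if_false, tsub_zero, tsub_right_comm]
      ring_nf
  | add p q hp hq => simp [hp, hq]

lemma MvPolynomial.coeff_sum_X_mul_pderiv {σ R : Type*} [Fintype σ] [CommSemiring R]
    (p : MvPolynomial σ R) (d : σ →₀ ℕ) :
    coeff d (∑ i, X i * pderiv i p) = (∑ i, d i) • coeff d p := by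
  induction p using MvPolynomial.induction_on' with
  | monomial m r =>
    classical
    simp only [X_mul_pderiv_monomial, coeff_smul, ← sum_smul]
    rcases eq_or_ne m d with rfl | h
    · rfl
    · rw [coeff_monomial, if_neg h, smul_zero, smul_zero]
  | add p q hp hq => simp only [map_add, mul_add, sum_add_distrib, coeff_add, hp, hq, smul_add]

lemma MvPolynomial.eq_zero_of_smul_add_sum_X_mul_pderiv_eq_zero {σ R : Type*} [Fintype σ]
    [Field R] [LinearOrder R] [IsStrictOrderedRing R] {c : R} (hc : 0 < c)
    {p : MvPolynomial σ R} (h : c • p + ∑ i, X i * pderiv i p = 0) : p = 0 := by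
  ext d
  have hd := congrArg (coeff d) h
  rw [coeff_add, coeff_smul, coeff_sum_X_mul_pderiv, coeff_zero, smul_eq_mul, nsmul_eq_mul,
    ← add_mul] at hd
  exact (mul_eq_zero.mp hd).resolve_left (by positivity)

lemma MvPolynomial.pderiv_prod_X {σ R : Type*} [CommSemiring R] [Nontrivial R] [DecidableEq σ]
    (i : σ) (τ : Finset σ) :
    pderiv i (∏ j ∈ τ, X j : MvPolynomial σ R) = if i ∈ τ then ∏ j ∈ τ.erase i, X j else 0 := by
  have hvars : ∀ τ : Finset σ, i ∉ τ → i ∉ (∏ j ∈ τ, X j : MvPolynomial σ R).vars :=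
    fun τ hi h => hi (by simpa [vars_X] using vars_prod _ h)
  split_ifs with hi
  · rw [← mul_prod_erase τ X hi, Derivation.leibniz, pderiv_X_self,
      pderiv_eq_zero_of_notMem_vars (hvars _ (notMem_erase i τ))]
    simp
  · exact pderiv_eq_zero_of_notMem_vars (hvars τ hi)

lemma MvPolynomial.isHomogeneous_prod_X {σ R : Type*} [CommSemiring R] (τ : Finset σ) :
    (∏ j ∈ τ, X j : MvPolynomial σ R).IsHomogeneous τ.card := by
  simpa using IsHomogeneous.prod τ X (fun _ => 1) fun j _ => isHomogeneous_X R j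

section Forms

variable {n k : ℕ}

lemma sgn_mul_self (s : Finset (Fin n)) (i : Fin n) : sgn s i * sgn s i = 1 := by
  rw [sgn, ← pow_add]
  exact Even.neg_one_pow ⟨_, rfl⟩

lemma sgn_insert {s : Finset (Fin n)} {i : Fin n} (hi : i ∉ s) (j : Fin n) :
    sgn (insert i s) j = if i < j then -sgn s j else sgn s j := by
  unfold sgn
  rw [filter_insert]
  split_ifs with h
  · rw [card_insert_of_notMem (by simp [hi]), pow_succ, mul_neg_one]
  · rfl

lemma sgn_erase {s : Finset (Fin n)} {i : Fin n} (hi : i ∈ s) (j : Fin n) :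
    sgn (s.erase i) j = if i < j then -sgn s j else sgn s j := by
  have h := sgn_insert (notMem_erase i s) j
  rw [insert_erase hi] at h
  split_ifs at h ⊢ <;> simp [h]

lemma sgn_insert_self (s : Finset (Fin n)) (i : Fin n) : sgn (insert i s) i = sgn s i := by
  rw [sgn, sgn, filter_insert, if_neg (lt_irrefl i)]

lemma sgn_erase_self (s : Finset (Fin n)) (i : Fin n) : sgn (s.erase i) i = sgn s i := by
  rw [sgn, sgn, filter_erase, erase_eq_of_notMem (by simp)]

lemma sgn_mul_sgn_erase {s : Finset (Fin n)} {i j : Fin n} (hi : i ∈ s) (hj : j ∈ s)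
    (hij : i ≠ j) : sgn s i * sgn (s.erase i) j = -(sgn s j * sgn (s.erase j) i) := by
  rw [sgn_erase hi, sgn_erase hj]
  rcases hij.lt_or_gt with h | h <;> simp [h, h.not_gt] <;> ring

lemma sgn_mul_sgn_insert {s : Finset (Fin n)} {i j : Fin n} (hi : i ∉ s) (hj : j ∉ s)
    (hij : i ≠ j) : sgn s i * sgn (insert i s) j = -(sgn s j * sgn (insert j s) i) := by
  rw [sgn_insert hi, sgn_insert hj]
  rcases hij.lt_or_gt with h | h <;> simp [h, h.not_gt] <;> ring

lemma sgn_mul_sgn_erase_insert {s : Finset (Fin n)} {i j : Fin n} (hi : i ∈ s) (hj : j ∉ s) :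
    sgn s i * sgn (s.erase i) j = -(sgn s j * sgn (insert j s) i) := by
  have hij : i ≠ j := by rintro rfl; exact hj hi
  rw [sgn_erase hi, sgn_insert hj]
  rcases hij.lt_or_gt with h | h <;> simp [h, h.not_gt] <;> ring

@[simp] lemma eraseIdx_val (s : Idx n (k+1)) {i : Fin n} (hi : i ∈ s.1) :
    (eraseIdx s hi).1 = s.1.erase i := rfl

@[simp] lemma insertIdx_val (s : Idx n k) {i : Fin n} (hi : i ∉ s.1) :
    (insertIdx s hi).1 = insert i s.1 := rfl

/-- `wedgeDx i ω = dxᵢ ∧ ω`. -/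
noncomputable def wedgeDx (i : Fin n) : Form n k →ₗ[MvPolynomial (Fin n) ℝ] Form n (k+1) where
  toFun ω s := if h : i ∈ s.1 then sgn s.1 i • ω (eraseIdx s h) else 0
  map_add' ω η := by funext s; by_cases h : i ∈ s.1 <;> simp [h, smul_add]
  map_smul' c ω := by funext s; by_cases h : i ∈ s.1 <;> simp [h]

/-- `contractDx i` is the interior product with `∂/∂xᵢ`. -/
noncomputable def contractDx (i : Fin n) : Form n (k+1) →ₗ[MvPolynomial (Fin n) ℝ] Form n k where
  toFun ω s := if h : i ∉ s.1 then sgn s.1 i • ω (insertIdx s h) else 0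
  map_add' ω η := by funext s; by_cases h : i ∈ s.1 <;> simp [h, smul_add]
  map_smul' c ω := by funext s; by_cases h : i ∈ s.1 <;> simp [h]

noncomputable def pderivForm (i : Fin n) : Form n k →ₗ[ℝ] Form n k :=
  LinearMap.pi fun s => (pderiv i).toLinearMap ∘ₗ LinearMap.proj s

lemma wedgeDx_apply (i : Fin n) (ω : Form n k) (s : Idx n (k+1)) :
    wedgeDx i ω s = if h : i ∈ s.1 then sgn s.1 i • ω (eraseIdx s h) else 0 := rfl

lemma contractDx_apply (i : Fin n) (ω : Form n (k+1)) (s : Idx n k) :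
    contractDx i ω s = if h : i ∉ s.1 then sgn s.1 i • ω (insertIdx s h) else 0 := rfl

lemma pderivForm_apply (i : Fin n) (ω : Form n k) (s : Idx n k) :
    pderivForm i ω s = pderiv i (ω s) := rfl

lemma extd_eq_sum (ω : Form n k) : extd n k ω = ∑ i, wedgeDx i (pderivForm i ω) := by
  funext s
  rw [Finset.sum_apply]
  exact Finset.sum_attach_eq_sum_dite s.1 fun i => sgn s.1 i • pderiv i.1 (ω (eraseIdx s i.2))

lemma koszul_eq_sum (ω : Form n (k+1)) :
    koszul n k ω = ∑ i, (X i : MvPolynomial (Fin n) ℝ) • contractDx i ω := by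
  funext s
  simp only [koszul, LinearMap.coe_mk, AddHom.coe_mk, Finset.sum_apply, Pi.smul_apply,
    contractDx_apply, smul_eq_mul]
  rw [Finset.sum_attach_eq_sum_dite s.1ᶜ
    fun i => sgn s.1 i • ((X i.1 : MvPolynomial (Fin n) ℝ) * ω (insertIdx s (mem_compl.mp i.2)))]
  refine sum_congr rfl fun i _ => ?_
  by_cases h : i ∈ s.1 <;> simp [h]

lemma pderivForm_smul (i : Fin n) (p : MvPolynomial (Fin n) ℝ) (ω : Form n k) :
    pderivForm i (p • ω) = pderiv i p • ω + p • pderivForm i ω := by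
  funext s
  simp [pderivForm_apply, Derivation.leibniz, add_comm, mul_comm]

lemma pderivForm_comm (i j : Fin n) (ω : Form n k) :
    pderivForm i (pderivForm j ω) = pderivForm j (pderivForm i ω) := by
  funext s
  exact pderiv_pderiv_comm ..

lemma wedgeDx_pderivForm (i j : Fin n) (ω : Form n k) :
    wedgeDx i (pderivForm j ω) = pderivForm j (wedgeDx i ω) := by
  funext s
  simp only [wedgeDx_apply, pderivForm_apply]
  split_ifs <;> simp

lemma contractDx_pderivForm (i j : Fin n) (ω : Form n (k+1)) :
    contractDx i (pderivForm j ω) = pderivForm j (contractDx i ω) := by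
  funext s
  simp only [contractDx_apply, pderivForm_apply]
  split_ifs <;> simp

lemma wedgeDx_anticomm (i j : Fin n) (ω : Form n k) :
    wedgeDx i (wedgeDx j ω) = -wedgeDx j (wedgeDx i ω) := by
  funext s
  simp only [wedgeDx_apply, Pi.neg_apply, eraseIdx_val, mem_erase]
  by_cases hij : i = j
  · subst hij; simp
  by_cases hi : i ∈ s.1 <;> by_cases hj : j ∈ s.1 <;> simp [hi, hj, hij, Ne.symm hij]
  rw [smul_smul, smul_smul, sgn_mul_sgn_erase hi hj hij, neg_smul]
  congr 2
  exact congrArg ω (Subtype.ext erase_right_comm)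

lemma contractDx_anticomm (i j : Fin n) (ω : Form n (k+2)) :
    contractDx i (contractDx j ω) = -contractDx j (contractDx i ω) := by
  funext s
  simp only [contractDx_apply, Pi.neg_apply, insertIdx_val, mem_insert, not_or]
  by_cases hij : i = j
  · subst hij; simp
  by_cases hi : i ∈ s.1 <;> by_cases hj : j ∈ s.1 <;> simp [hi, hj, hij, Ne.symm hij]
  rw [smul_smul, smul_smul, sgn_mul_sgn_insert hi hj hij, neg_smul]
  congr 2
  exact congrArg ω (Subtype.ext (insert_comm j i s.1))

lemma wedgeDx_contractDx_self_apply (i : Fin n) (ω : Form n (k+1)) (s : Idx n (k+1)) :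
    wedgeDx i (contractDx i ω) s = if i ∈ s.1 then ω s else 0 := by
  rw [wedgeDx_apply]
  split_ifs with hi
  · rw [contractDx_apply, dif_pos (by simp), smul_smul,
      show sgn (eraseIdx s hi).1 i = sgn s.1 i from sgn_erase_self _ _, sgn_mul_self, one_smul]
    exact congrArg ω (Subtype.ext (insert_erase hi))
  · rfl

lemma contractDx_wedgeDx_self_apply (i : Fin n) (ω : Form n (k+1)) (s : Idx n (k+1)) :
    contractDx i (wedgeDx i ω) s = if i ∈ s.1 then 0 else ω s := by
  rw [contractDx_apply]
  by_cases hi : i ∈ s.1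
  · rw [dif_neg (not_not.mpr hi), if_pos hi]
  · rw [dif_pos hi, if_neg hi, wedgeDx_apply, dif_pos (by simp), smul_smul,
      show sgn (insertIdx s hi).1 i = sgn s.1 i from sgn_insert_self _ _, sgn_mul_self, one_smul]
    exact congrArg ω (Subtype.ext (erase_insert hi))

lemma wedgeDx_contractDx_add_contractDx_wedgeDx (i j : Fin n) (ω : Form n (k+1)) :
    wedgeDx i (contractDx j ω) + contractDx j (wedgeDx i ω) = if i = j then ω else 0 := by
  funext s
  by_cases hij : i = j
  · subst hij
    rw [if_pos rfl, Pi.add_apply, wedgeDx_contractDx_self_apply, contractDx_wedgeDx_self_apply]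
    split_ifs <;> simp
  simp only [Pi.add_apply, wedgeDx_apply, contractDx_apply, eraseIdx_val, insertIdx_val,
    mem_erase, mem_insert, hij, if_false, Pi.zero_apply]
  by_cases hi : i ∈ s.1 <;> by_cases hj : j ∈ s.1 <;> simp [hi, hj, hij, Ne.symm hij]
  rw [smul_smul, smul_smul, sgn_mul_sgn_erase_insert hi hj, neg_smul, neg_add_eq_zero]
  exact congrArg _ (congrArg ω (Subtype.ext (erase_insert_of_ne (Ne.symm hij)).symm))

lemma sum_wedgeDx_contractDx (ω : Form n (k+1)) :
    ∑ i, wedgeDx i (contractDx i ω) = (k + 1 : ℝ) • ω := by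
  funext s
  simp [Finset.sum_apply, wedgeDx_contractDx_self_apply, s.2, Algebra.smul_def]

lemma extd_extd (ω : Form n k) : extd n (k+1) (extd n k ω) = 0 := by
  simp only [extd_eq_sum, map_sum, ← wedgeDx_pderivForm]
  exact sum_sum_eq_zero_of_antisymm _ _ fun i j => by rw [wedgeDx_anticomm, pderivForm_comm]

lemma koszul_koszul (ω : Form n (k+2)) : koszul n k (koszul n (k+1) ω) = 0 := by
  simp only [koszul_eq_sum, map_sum, map_smul]
  exact sum_sum_eq_zero_of_antisymm _ _ fun i j => by
    rw [contractDx_anticomm, smul_neg, smul_neg, smul_comm]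

lemma extd_koszul_add_koszul_extd (ω : Form n (k+1)) :
    extd n k (koszul n k ω) + koszul n (k+1) (extd n (k+1) ω)
      = (k + 1 : ℝ) • ω + ∑ i, (X i : MvPolynomial (Fin n) ℝ) • pderivForm i ω := by
  have hd : extd n k (koszul n k ω) = ∑ i, wedgeDx i (contractDx i ω)
      + ∑ j, ∑ i, (X j : MvPolynomial (Fin n) ℝ) • wedgeDx i (contractDx j (pderivForm i ω)) := by
    simp only [extd_eq_sum, koszul_eq_sum, map_sum, pderivForm_smul, map_add, map_smul,
      ← contractDx_pderivForm, sum_add_distrib, pderiv_X]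
    congr 1
    simp [Pi.single_apply]
  have hκ : koszul n (k+1) (extd n (k+1) ω)
      = ∑ j, ∑ i, (X j : MvPolynomial (Fin n) ℝ) • contractDx j (wedgeDx i (pderivForm i ω)) := by
    simp only [extd_eq_sum, koszul_eq_sum, map_sum]
    exact sum_comm
  rw [hd, hκ, add_assoc, ← sum_add_distrib, sum_wedgeDx_contractDx]
  congr 1
  simp only [← sum_add_distrib, ← smul_add, wedgeDx_contractDx_add_contractDx_wedgeDx]
  simp

lemma eq_zero_of_smul_add_euler_eq_zero {c : ℝ} (hc : 0 < c) {ω : Form n k}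
    (h : c • ω + ∑ i, (X i : MvPolynomial (Fin n) ℝ) • pderivForm i ω = 0) : ω = 0 := by
  funext s
  refine eq_zero_of_smul_add_sum_X_mul_pderiv_eq_zero hc ?_
  simpa [Finset.sum_apply, pderivForm_apply] using congrFun h s

lemma eq_zero_of_extd_eq_zero_of_koszul_eq_zero {ω : Form n (k+1)}
    (hd : extd n (k+1) ω = 0) (hκ : koszul n k ω = 0) : ω = 0 := by
  have h := extd_koszul_add_koszul_extd ω
  rw [hd, hκ, map_zero, map_zero, add_zero] at h
  exact eq_zero_of_smul_add_euler_eq_zero (by positivity) h.symm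

lemma disjoint_map_extd_map_koszul_map_extd (U : Submodule ℝ (Form n k))
    (V : Submodule ℝ (Form n (k+1))) :
    Disjoint (U.map (extd n k)) ((V.map (extd n (k+1))).map (koszul n (k+1))) := by
  rw [Submodule.disjoint_def]
  rintro _ ⟨α, -, rfl⟩ ⟨_, ⟨γ, -, rfl⟩, hω⟩
  refine eq_zero_of_extd_eq_zero_of_koszul_eq_zero (extd_extd α) ?_
  rw [← hω, koszul_koszul]

lemma monForm_eq_smul (τ : Finset (Fin n)) (σ : Idx n k) :
    monForm n k τ σ = (∏ j ∈ τ, X j : MvPolynomial (Fin n) ℝ) • monForm n k ∅ σ := by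
  funext s
  simp only [monForm, Pi.smul_apply, prod_empty, smul_eq_mul, mul_ite, mul_one, mul_zero]

lemma monForm_mem_Qm {τ : Finset (Fin n)} {σ : Idx n k} (hτ : τ ⊆ σ.1ᶜ) :
    monForm n k τ σ ∈ Qm n k := by
  refine Submodule.subset_span ⟨τ, σ, ?_, hτ, rfl⟩
  simpa [card_compl, σ.2] using card_le_card hτ

lemma pderivForm_smul_monForm_empty (i : Fin n) (p : MvPolynomial (Fin n) ℝ) (σ : Idx n k) :
    pderivForm i (p • monForm n k ∅ σ) = pderiv i p • monForm n k ∅ σ := by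
  have : pderivForm i (monForm n k ∅ σ) = 0 := by
    funext s
    simp [pderivForm_apply, monForm, apply_ite]
  rw [pderivForm_smul, this, smul_zero, add_zero]

lemma wedgeDx_monForm_empty (i : Fin n) (σ : Idx n k) :
    wedgeDx i (monForm n k ∅ σ)
      = if h : i ∈ σ.1 then 0 else sgn (insert i σ.1) i • monForm n (k+1) ∅ (insertIdx σ h) := by
  funext s
  rw [wedgeDx_apply]
  by_cases hiσ : i ∈ σ.1
  · rw [dif_pos hiσ, Pi.zero_apply]
    split_ifs with his
    · have hs : eraseIdx s his ≠ σ := fun hs => by simp [← hs] at hiσ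
      simp [monForm, hs]
    · rfl
  · rw [dif_neg hiσ, Pi.smul_apply]
    by_cases hs : s = insertIdx σ hiσ
    · subst hs
      have hσ : eraseIdx (insertIdx σ hiσ) (mem_insert_self i σ.1) = σ :=
        Subtype.ext (erase_insert hiσ)
      rw [dif_pos (show i ∈ (insertIdx σ hiσ).1 from mem_insert_self i σ.1)]
      simp [monForm, hσ]
    · split_ifs with his
      · have he : eraseIdx s his ≠ σ := fun he =>
          hs (Subtype.ext (by rw [insertIdx_val, ← he, eraseIdx_val, insert_erase his]))
        simp [monForm, he, hs]
      · simp [monForm, hs]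

lemma contractDx_monForm_empty (i : Fin n) (σ : Idx n (k+1)) :
    contractDx i (monForm n (k+1) ∅ σ)
      = if h : i ∈ σ.1 then sgn (σ.1.erase i) i • monForm n k ∅ (eraseIdx σ h) else 0 := by
  funext s
  rw [contractDx_apply]
  by_cases hiσ : i ∈ σ.1
  · rw [dif_pos hiσ, Pi.smul_apply]
    by_cases hs : s = eraseIdx σ hiσ
    · subst hs
      have hσ : insertIdx (eraseIdx σ hiσ) (notMem_erase i σ.1) = σ :=
        Subtype.ext (insert_erase hiσ)
      rw [dif_pos (show i ∉ (eraseIdx σ hiσ).1 from notMem_erase i σ.1)]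
      simp [monForm, hσ]
    · by_cases his : i ∈ s.1
      · rw [dif_neg (not_not.mpr his)]
        simp [monForm, hs]
      · have he : insertIdx s his ≠ σ := fun he =>
          hs (Subtype.ext (by rw [eraseIdx_val, ← he, insertIdx_val, erase_insert his]))
        rw [dif_pos his]
        simp [monForm, he, hs]
  · rw [dif_neg hiσ, Pi.zero_apply]
    by_cases his : i ∈ s.1
    · rw [dif_neg (not_not.mpr his)]
    · have hs : insertIdx s his ≠ σ := fun hs => hiσ (hs ▸ mem_insert_self i s.1)
      rw [dif_pos his]
      simp [monForm, hs]

lemma euler_smul_monForm_empty {p : MvPolynomial (Fin n) ℝ} {m : ℕ} (hp : p.IsHomogeneous m)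
    (σ : Idx n k) :
    ∑ i, (X i : MvPolynomial (Fin n) ℝ) • pderivForm i (p • monForm n k ∅ σ)
      = (m : ℝ) • p • monForm n k ∅ σ := by
  simp only [pderivForm_smul_monForm_empty, smul_smul, ← sum_smul, hp.sum_X_mul_pderiv]
  rw [smul_assoc, Nat.cast_smul_eq_nsmul]

lemma extd_monForm_mem_Qm {τ : Finset (Fin n)} {σ : Idx n k} (hτ : τ ⊆ σ.1ᶜ) :
    extd n k (monForm n k τ σ) ∈ Qm n (k+1) := by
  rw [extd_eq_sum, monForm_eq_smul]
  refine Submodule.sum_mem _ fun i _ => ?_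
  rw [pderivForm_smul_monForm_empty, map_smul, wedgeDx_monForm_empty, pderiv_prod_X]
  by_cases hiτ : i ∈ τ
  · have hiσ : i ∉ σ.1 := mem_compl.mp (hτ hiτ)
    rw [if_pos hiτ, dif_neg hiσ, smul_comm, ← monForm_eq_smul]
    refine Submodule.smul_mem _ _ (monForm_mem_Qm fun j hj => ?_)
    simp only [mem_compl, insertIdx_val, mem_insert, not_or]
    exact ⟨ne_of_mem_erase hj, mem_compl.mp (hτ (mem_of_mem_erase hj))⟩
  · rw [if_neg hiτ, zero_smul]
    exact zero_mem _

lemma koszul_monForm_mem_Qm {τ : Finset (Fin n)} {σ : Idx n (k+1)} (hτ : τ ⊆ σ.1ᶜ) :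
    koszul n k (monForm n (k+1) τ σ) ∈ Qm n k := by
  rw [koszul_eq_sum, monForm_eq_smul]
  refine Submodule.sum_mem _ fun i _ => ?_
  rw [map_smul, contractDx_monForm_empty, smul_smul]
  by_cases hiσ : i ∈ σ.1
  · have hiτ : i ∉ τ := fun h => mem_compl.mp (hτ h) hiσ
    rw [dif_pos hiσ, smul_comm, ← prod_insert hiτ, ← monForm_eq_smul]
    refine Submodule.smul_mem _ _ (monForm_mem_Qm fun j hj => ?_)
    simp only [mem_compl, eraseIdx_val, mem_erase, not_and]
    rcases mem_insert.mp hj with rfl | hj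
    · exact fun h => (h rfl).elim
    · exact fun _ => mem_compl.mp (hτ hj)
  · rw [dif_neg hiσ, smul_zero]
    exact zero_mem _

lemma map_extd_Qm_le : (Qm n k).map (extd n k) ≤ Qm n (k+1) := by
  rw [Qm, Submodule.map_span_le]
  rintro _ ⟨τ, σ, -, hτ, rfl⟩
  exact extd_monForm_mem_Qm hτ

lemma map_koszul_Qm_le : (Qm n (k+1)).map (koszul n k) ≤ Qm n k := by
  rw [Qm, Submodule.map_span_le]
  rintro _ ⟨τ, σ, -, hτ, rfl⟩
  exact koszul_monForm_mem_Qm hτ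

lemma monForm_mem_map_extd_sup_map_koszul {τ : Finset (Fin n)} {σ : Idx n (k+1)}
    (hτ : τ ⊆ σ.1ᶜ) :
    monForm n (k+1) τ σ ∈
      (Qm n k).map (extd n k) ⊔ ((Qm n (k+1)).map (extd n (k+1))).map (koszul n (k+1)) := by
  set ω := monForm n (k+1) τ σ with hω_def
  set c : ℝ := k + 1 + τ.card
  have hhom : extd n k (koszul n k ω) + koszul n (k+1) (extd n (k+1) ω) = c • ω := by
    rw [extd_koszul_add_koszul_extd, hω_def, monForm_eq_smul,
      euler_smul_monForm_empty (isHomogeneous_prod_X τ), ← add_smul]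
  have hω : ω = extd n k (c⁻¹ • koszul n k ω) + koszul n (k+1) (extd n (k+1) (c⁻¹ • ω)) := by
    rw [map_smul, map_smul, map_smul, ← smul_add, hhom, inv_smul_smul₀ (by positivity)]
  rw [hω]
  exact add_mem
    (Submodule.mem_sup_left (Submodule.mem_map_of_mem
      (Submodule.smul_mem _ _ (koszul_monForm_mem_Qm hτ))))
    (Submodule.mem_sup_right (Submodule.mem_map_of_mem (Submodule.mem_map_of_mem
      (Submodule.smul_mem _ _ (monForm_mem_Qm hτ)))))

lemma Qm_le_map_extd_sup_map_koszul :
    Qm n (k+1) ≤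
      (Qm n k).map (extd n k) ⊔ ((Qm n (k+1)).map (extd n (k+1))).map (koszul n (k+1)) :=
  Submodule.span_le.mpr fun _ ⟨_, _, _, hτ, hω⟩ => hω ▸ monForm_mem_map_extd_sup_map_koszul hτ

end Forms

theorem stmt4_general (n k : ℕ) :
    Disjoint (Submodule.map (extd n k) (Qm n k))
        (Submodule.map (koszul n (k+1)) (Submodule.map (extd n (k+1)) (Qm n (k+1)))) ∧
      Qm n (k+1) =
        Submodule.map (extd n k) (Qm n k) ⊔
          Submodule.map (koszul n (k+1)) (Submodule.map (extd n (k+1)) (Qm n (k+1))) :=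
  ⟨disjoint_map_extd_map_koszul_map_extd _ _,
    le_antisymm Qm_le_map_extd_sup_map_koszul
      (sup_le map_extd_Qm_le ((Submodule.map_mono map_extd_Qm_le).trans map_koszul_Qm_le))⟩

/-- homotopy decomposition. `Q_1^-Λ^{k+1}` is the direct sum of the exact forms
`R(d^k, Q_1^-Λ^k)` and the Koszul image `κ R(d^{k+1}, Q_1^-Λ^{k+1})`. -/
theorem stmt4 (n k : ℕ) (hk : k + 1 ≤ n) :
    Disjoint (Submodule.map (extd n k) (Qm n k))
        (Submodule.map (koszul n (k+1)) (Submodule.map (extd n (k+1)) (Qm n (k+1)))) ∧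
      Qm n (k+1) =
        Submodule.map (extd n k) (Qm n k) ⊔
          Submodule.map (koszul n (k+1)) (Submodule.map (extd n (k+1)) (Qm n (k+1))) :=
  stmt4_general n k
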